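/- arXiv:1402.7243 — 3 statements merged into one kernel-verified Lean document; each statement's English description precedes it below -/
import Mathlib

section
/- Let R, S, ψ be a numerical solution of the semi-discrete energy-conservative DG scheme for the Riemann-invariant (RS) formulation with periodic boundary conditions; that is, for every t ∈ [0,T] and all test functions φ, η, ζ ∈ X^p_Δx(Ω): (i) Σ_{j=1}^N [ ∫_{Ω_j} ∂_tR·φ dx + ∫_{Ω_j} c(ψ)·R·∂_xφ dx − c̄_{j+1/2}·R̄_{j+1/2}·φ⁻_{j+1/2} + c̄_{j−1/2}·R̄_{j−1/2}·φ⁺_{j−1/2} ] = Σ_{j=1}^N [ (1/2)∫_{Ω_j} c(ψ)·∂_x(Rφ) dx − (1/2)c̄_{j+1/2}R⁻_{j+1/2}φ⁻_{j+1/2} + (1/2)c̄_{j−1/2}R⁺_{j−1/2}φ⁺_{j−1/2} − (1/2)∫_{Ω_j} c(ψ)·∂_x(Sφ) dx + (1/2)c̄_{j+1/2}S⁻_{j+1/2}φ⁻_{j+1/2} − (1/2)c̄_{j−1/2}S⁺_{j−1/2}φ⁺_{j−1/2} ]; (ii) Σ_{j=1}^N [ ∫_{Ω_j} ∂_tS·η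 dx − ∫_{Ω_j} c(ψ)·S·∂_xη dx + c̄_{j+1/2}·S̄_{j+1/2}·η⁻_{j+1/2} − c̄_{j−1/2}·S̄_{j−1/2}·η⁺_{j−1/2} ] = Σ_{j=1}^N [ (1/2)∫_{Ω_j} c(ψ)·∂_x(Rη) dx − (1/2)c̄_{j+1/2}R⁻_{j+1/2}η⁻_{j+1/2} + (1/2)c̄_{j−1/2}R⁺_{j−1/2}η⁺_{j−1/2} − (1/2)∫_{Ω_j} c(ψ)·∂_x(Sη) dx + (1/2)c̄_{j+1/2}S⁻_{j+1/2}η⁻_{j+1/2} − (1/2)c̄_{j−1/2}S⁺_{j−1/2}η⁺_{j−1/2} ]; (iii) Σ_{j=1}^N ∫_{Ω_j} ∂_tψ·ζ dx = Σ_{j=1}^N ∫_{Ω_j} ((R+S)/2)·ζ dx. Then the discrete energy t ↦ Σ_{j=1}^N ∫_{Ω_j} (R(t,x)² + S(t,x)²)/2 dx has derivative zero for every t ∈ [0,T], i.e. it is constant in time. -/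
/-! Test the `R`-equation with `R(t)` and the `S`-equation with `S(t)`. The left-hand sides become
the energy rates `(∂ₜR, R)`, `(∂ₜS, S)` plus central-flux terms; for a component tested against
itself the central flux equals the split form `B(u, u)`, and the right-hand sides read
`B(R, ·) - B(S, ·)`. Hence `(∂ₜR, R) = -B(S, R)` and `(∂ₜS, S) = B(R, S)`, and the rates cancel
because `B` is symmetric once the periodic interface index is shifted. -/

open Finset

noncomputable section

/-- The wave speed `c(u) = √(α cos²u + β sin²u)`. -/
def waveC (α β u : ℝ) : ℝ :=
  Real.sqrt (α * Real.cos u ^ 2 + β * Real.sin u ^ 2)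

/-- Left endpoint `x_{j-1/2}` of cell `Ω_j`. -/
def cellL {N : ℕ} (x : Fin (N + 1) → ℝ) (j : Fin N) : ℝ := x j.castSucc

/-- Right endpoint `x_{j+1/2}` of cell `Ω_j`. -/
def cellR {N : ℕ} (x : Fin (N + 1) → ℝ) (j : Fin N) : ℝ := x j.succ

/-- Minus (left) trace `u⁻_{j+1/2}` of the grid function `u` at the interface
to the right of cell `j`, at time `t`. -/
def trM {N : ℕ} (x : Fin (N + 1) → ℝ) (u : Fin N → ℝ → ℝ → ℝ) (t : ℝ) (j : Fin N) : ℝ :=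
  u j t (cellR x j)

/-- Plus (right) trace `u⁺_{j+1/2}` at the interface to the right of cell `j`
(cell indices are periodic: the cell to the right of cell `j` is `j + 1` in `Fin N`). -/
def trP {N : ℕ} [NeZero N] (x : Fin (N + 1) → ℝ) (u : Fin N → ℝ → ℝ → ℝ) (t : ℝ) (j : Fin N) : ℝ :=
  u (j + 1) t (cellL x (j + 1))

/-- Interface average `ū_{j+1/2} = (u⁺ + u⁻)/2`. -/
def avgI {N : ℕ} [NeZero N] (x : Fin (N + 1) → ℝ) (u : Fin N → ℝ → ℝ → ℝ) (t : ℝ) (j : Fin N) : ℝ :=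
  (trP x u t j + trM x u t j) / 2

/-- Averaged interface wave speed `c̄_{j+1/2} = (c(ψ⁺) + c(ψ⁻))/2`. -/
def cbarI {N : ℕ} [NeZero N] (α β : ℝ) (x : Fin (N + 1) → ℝ)
    (ψ : Fin N → ℝ → ℝ → ℝ) (t : ℝ) (j : Fin N) : ℝ :=
  (waveC α β (trP x ψ t j) + waveC α β (trM x ψ t j)) / 2

/-- `f : ℝ → ℝ` is (the cell restriction of) a polynomial of degree `≤ p`,
i.e. the cell belongs to the space `X^p_Δx`. -/
def IsPolyDeg (p : ℕ) (f : ℝ → ℝ) : Prop :=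
  ∃ q : Polynomial ℝ, q.natDegree ≤ p ∧ ∀ y : ℝ, f y = q.eval y

lemma hasDerivAt_partial_fst {f : ℝ → ℝ → ℝ} (hf : ContDiff ℝ 1 (Function.uncurry f))
    (s y : ℝ) :
    HasDerivAt (fun s' => f s' y) (fderiv ℝ (Function.uncurry f) (s, y) (1, 0)) s :=
  (hf.differentiable one_ne_zero (s, y)).hasFDerivAt.comp_hasDerivAt (f := fun s' => (s', y)) s
    ((hasDerivAt_id s).prodMk (hasDerivAt_const s y))

lemma continuous_deriv_partial_fst {f : ℝ → ℝ → ℝ} (hf : ContDiff ℝ 1 (Function.uncurry f)) :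
    Continuous fun q : ℝ × ℝ => deriv (fun s => f s q.2) q.1 := by
  simp only [fun q : ℝ × ℝ => (hasDerivAt_partial_fst hf q.1 q.2).deriv]
  exact (hf.continuous_fderiv one_ne_zero).clm_apply continuous_const

lemma hasDerivAt_intervalIntegral_of_contDiff {f : ℝ → ℝ → ℝ}
    (hf : ContDiff ℝ 1 (Function.uncurry f)) (a b t : ℝ) :
    HasDerivAt (fun s => ∫ y in a..b, f s y) (∫ y in a..b, deriv (fun s => f s y) t) t := by
  obtain ⟨C, hC⟩ := ((isCompact_closedBall t 1).prod isCompact_uIcc).exists_bound_of_continuousOn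
    (continuous_deriv_partial_fst hf).continuousOn
  refine (intervalIntegral.hasDerivAt_integral_of_dominated_loc_of_deriv_le (F := f)
    (F' := fun s y => deriv (fun s' => f s' y) s) (bound := fun _ => C)
    (Metric.ball_mem_nhds t one_pos) ?_ ?_ ?_ ?_ ?_ ?_).2
  · exact .of_forall fun s => (hf.continuous.comp (.prodMk_right s)).aestronglyMeasurable
  · exact (hf.continuous.comp (.prodMk_right t)).intervalIntegrable _ _
  · exact ((continuous_deriv_partial_fst hf).comp (.prodMk_right t)).aestronglyMeasurable
  · exact .of_forall fun y hy s hs =>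
      hC (s, y) ⟨Metric.ball_subset_closedBall hs, Set.Ioc_subset_Icc_self hy⟩
  · exact intervalIntegrable_const
  · exact .of_forall fun y _ s _ =>
      (hasDerivAt_partial_fst hf s y).differentiableAt.hasDerivAt

lemma hasDerivAt_intervalIntegral_sq_half {f : ℝ → ℝ → ℝ}
    (hf : ContDiff ℝ 1 (Function.uncurry f)) (a b t : ℝ) :
    HasDerivAt (fun s => ∫ y in a..b, f s y ^ 2 / 2)
      (∫ y in a..b, deriv (fun s => f s y) t * f t y) t := by
  convert hasDerivAt_intervalIntegral_of_contDiff (f := fun s y => f s y ^ 2 / 2)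
    ((hf.pow 2).div_const 2) a b t using 1
  refine intervalIntegral.integral_congr fun y _ => ?_
  have h := (((hasDerivAt_partial_fst hf t y).differentiableAt.hasDerivAt).fun_pow 2).div_const 2
  rw [h.deriv]
  push_cast
  ring

lemma integral_mul_deriv_mul_self {f : ℝ → ℝ} (hf : Differentiable ℝ f) (g : ℝ → ℝ)
    (a b : ℝ) :
    ∫ y in a..b, g y * deriv (fun z => f z * f z) y = 2 * ∫ y in a..b, g y * f y * deriv f y := by
  rw [← intervalIntegral.integral_const_mul]
  refine intervalIntegral.integral_congr fun y _ => ?_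
  simp only [deriv_fun_mul (hf y) (hf y)]
  ring

lemma IsPolyDeg.differentiable {p : ℕ} {f : ℝ → ℝ} (h : IsPolyDeg p f) : Differentiable ℝ f := by
  obtain ⟨q, -, hq⟩ := h
  exact funext hq ▸ q.differentiable

section DGForms

variable {N : ℕ} (α β : ℝ) (x : Fin (N + 1) → ℝ) (ψ : Fin N → ℝ → ℝ → ℝ) (t : ℝ)

def dtPairing (u : Fin N → ℝ → ℝ → ℝ) (v : Fin N → ℝ → ℝ) : ℝ :=
  ∑ j, ∫ y in cellL x j..cellR x j, deriv (fun s => u j s y) t * v j y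

lemma hasDerivAt_energy (R S : Fin N → ℝ → ℝ → ℝ)
    (hR : ∀ j, ContDiff ℝ 1 (Function.uncurry (R j)))
    (hS : ∀ j, ContDiff ℝ 1 (Function.uncurry (S j))) :
    HasDerivAt (fun s => ∑ j, ∫ y in cellL x j..cellR x j, (R j s y ^ 2 + S j s y ^ 2) / 2)
      (dtPairing x t R (fun j => R j t) + dtPairing x t S (fun j => S j t)) t := by
  have hsplit : ∀ s j, ∫ y in cellL x j..cellR x j, (R j s y ^ 2 + S j s y ^ 2) / 2
      = (∫ y in cellL x j..cellR x j, R j s y ^ 2 / 2)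
        + ∫ y in cellL x j..cellR x j, S j s y ^ 2 / 2 := fun s j => by
    rw [← intervalIntegral.integral_add]
    · simp only [add_div]
    all_goals refine Continuous.intervalIntegrable ?_ _ _
    · exact (((hR j).continuous.comp (.prodMk_right s)).pow 2).div_const 2
    · exact (((hS j).continuous.comp (.prodMk_right s)).pow 2).div_const 2
  simp only [hsplit, dtPairing, ← Finset.sum_add_distrib]
  exact HasDerivAt.fun_sum fun j _ => (hasDerivAt_intervalIntegral_sq_half (hR j) _ _ t).add
    (hasDerivAt_intervalIntegral_sq_half (hS j) _ _ t)

variable [NeZero N]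

lemma trP_sub_one (u : Fin N → ℝ → ℝ → ℝ) (j : Fin N) :
    trP x u t (j - 1) = u j t (cellL x j) := by
  simp only [trP, sub_add_cancel]

lemma sum_trP_shift (u : Fin N → ℝ → ℝ → ℝ) (F : Fin N → ℝ → ℝ) :
    ∑ j, F (j - 1) (u j t (cellL x j)) = ∑ j, F j (trP x u t j) := by
  rw [← (Equiv.subRight (1 : Fin N)).sum_comp fun j => F j (trP x u t j)]
  simp only [Equiv.subRight_apply, trP_sub_one]

/- The left-hand side of (i) is `dtPairing R φ + centralForm R φ`, that of (ii) is
`dtPairing S η - centralForm S η`, and both right-hand sides are `splitForm R φ - splitForm S φ`. -/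
def centralForm (u : Fin N → ℝ → ℝ → ℝ) (v : Fin N → ℝ → ℝ) : ℝ :=
  (∑ j, ∫ y in cellL x j..cellR x j, waveC α β (ψ j t y) * u j t y * deriv (v j) y)
  - (∑ j, cbarI α β x ψ t j * avgI x u t j * v j (cellR x j))
  + (∑ j, cbarI α β x ψ t (j - 1) * avgI x u t (j - 1) * v j (cellL x j))

def splitForm (u : Fin N → ℝ → ℝ → ℝ) (v : Fin N → ℝ → ℝ) : ℝ :=
  (1 / 2) * (∑ j, ∫ y in cellL x j..cellR x j,
      waveC α β (ψ j t y) * deriv (fun z => u j t z * v j z) y)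
  - (1 / 2) * (∑ j, cbarI α β x ψ t j * trM x u t j * v j (cellR x j))
  + (1 / 2) * (∑ j, cbarI α β x ψ t (j - 1) * trP x u t (j - 1) * v j (cellL x j))

lemma splitForm_comm (u w : Fin N → ℝ → ℝ → ℝ) :
    splitForm α β x ψ t u (fun j => w j t) = splitForm α β x ψ t w (fun j => u j t) := by
  simp only [splitForm, trM, trP_sub_one, mul_comm (u _ t _), mul_assoc]

lemma centralForm_self (u : Fin N → ℝ → ℝ → ℝ) (hu : ∀ j, Differentiable ℝ (u j t)) :
    centralForm α β x ψ t u (fun j => u j t) = splitForm α β x ψ t u (fun j => u j t) := by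
  simp only [centralForm, splitForm, integral_mul_deriv_mul_self (hu _), ← Finset.mul_sum]
  rw [sum_trP_shift x t u fun k w => cbarI α β x ψ t k * avgI x u t k * w,
    sum_trP_shift x t u fun k w => cbarI α β x ψ t k * trP x u t k * w]
  have hflux : ∀ j, cbarI α β x ψ t j * avgI x u t j * trP x u t j
      - cbarI α β x ψ t j * avgI x u t j * trM x u t j
      = 1 / 2 * (cbarI α β x ψ t j * trP x u t j * trP x u t j)
      - 1 / 2 * (cbarI α β x ψ t j * trM x u t j * trM x u t j) := fun j => by
    simp only [avgI]; ring
  have hsum := Finset.sum_congr rfl fun j (_ : j ∈ Finset.univ) => hflux j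
  simp only [Finset.sum_sub_distrib, ← Finset.mul_sum, trM] at hsum ⊢
  linarith

end DGForms

theorem dg_RS_conservative_energy_general
    (N p : ℕ) [NeZero N] (T α β : ℝ)
    (x : Fin (N + 1) → ℝ)
    (R S ψ : Fin N → ℝ → ℝ → ℝ)
    (hRreg : ∀ j, ContDiff ℝ 1 (Function.uncurry (R j)))
    (hSreg : ∀ j, ContDiff ℝ 1 (Function.uncurry (S j)))
    (hRpoly : ∀ j t, IsPolyDeg p (R j t))
    (hSpoly : ∀ j t, IsPolyDeg p (S j t))
    -- scheme equation (i) (the `R`-equation), for all test functions `φ ∈ X^p_Δx`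
    (hscheme1 : ∀ φ : Fin N → Polynomial ℝ, (∀ j, (φ j).natDegree ≤ p) →
      ∀ t ∈ Set.Icc (0 : ℝ) T,
        (∑ j : Fin N, ∫ y in cellL x j..cellR x j,
            deriv (fun s => R j s y) t * (φ j).eval y)
        + (∑ j : Fin N, ∫ y in cellL x j..cellR x j,
            waveC α β (ψ j t y) * R j t y * deriv (fun z => (φ j).eval z) y)
        - (∑ j : Fin N, cbarI α β x ψ t j * avgI x R t j * (φ j).eval (cellR x j))
        + (∑ j : Fin N,
            cbarI α β x ψ t (j - 1) * avgI x R t (j - 1) * (φ j).eval (cellL x j))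
        =
        (1 / 2) * (∑ j : Fin N, ∫ y in cellL x j..cellR x j,
            waveC α β (ψ j t y) * deriv (fun z => R j t z * (φ j).eval z) y)
        - (1 / 2) * (∑ j : Fin N,
            cbarI α β x ψ t j * trM x R t j * (φ j).eval (cellR x j))
        + (1 / 2) * (∑ j : Fin N,
            cbarI α β x ψ t (j - 1) * trP x R t (j - 1) * (φ j).eval (cellL x j))
        - (1 / 2) * (∑ j : Fin N, ∫ y in cellL x j..cellR x j,
            waveC α β (ψ j t y) * deriv (fun z => S j t z * (φ j).eval z) y)
        + (1 / 2) * (∑ j : Fin N,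
            cbarI α β x ψ t j * trM x S t j * (φ j).eval (cellR x j))
        - (1 / 2) * (∑ j : Fin N,
            cbarI α β x ψ t (j - 1) * trP x S t (j - 1) * (φ j).eval (cellL x j)))
    -- scheme equation (ii) (the `S`-equation), for all test functions `η ∈ X^p_Δx`
    (hscheme2 : ∀ η : Fin N → Polynomial ℝ, (∀ j, (η j).natDegree ≤ p) →
      ∀ t ∈ Set.Icc (0 : ℝ) T,
        (∑ j : Fin N, ∫ y in cellL x j..cellR x j,
            deriv (fun s => S j s y) t * (η j).eval y)
        - (∑ j : Fin N, ∫ y in cellL x j..cellR x j,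
            waveC α β (ψ j t y) * S j t y * deriv (fun z => (η j).eval z) y)
        + (∑ j : Fin N, cbarI α β x ψ t j * avgI x S t j * (η j).eval (cellR x j))
        - (∑ j : Fin N,
            cbarI α β x ψ t (j - 1) * avgI x S t (j - 1) * (η j).eval (cellL x j))
        =
        (1 / 2) * (∑ j : Fin N, ∫ y in cellL x j..cellR x j,
            waveC α β (ψ j t y) * deriv (fun z => R j t z * (η j).eval z) y)
        - (1 / 2) * (∑ j : Fin N,
            cbarI α β x ψ t j * trM x R t j * (η j).eval (cellR x j))
        + (1 / 2) * (∑ j : Fin N,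
            cbarI α β x ψ t (j - 1) * trP x R t (j - 1) * (η j).eval (cellL x j))
        - (1 / 2) * (∑ j : Fin N, ∫ y in cellL x j..cellR x j,
            waveC α β (ψ j t y) * deriv (fun z => S j t z * (η j).eval z) y)
        + (1 / 2) * (∑ j : Fin N,
            cbarI α β x ψ t j * trM x S t j * (η j).eval (cellR x j))
        - (1 / 2) * (∑ j : Fin N,
            cbarI α β x ψ t (j - 1) * trP x S t (j - 1) * (η j).eval (cellL x j))) :
    ∀ t ∈ Set.Icc (0 : ℝ) T,
      HasDerivAt
        (fun s => ∑ j : Fin N, ∫ y in cellL x j..cellR x j,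
          (R j s y ^ 2 + S j s y ^ 2) / 2)
        0 t := by
  intro t ht
  choose QR hQRdeg hQReval using fun j => hRpoly j t
  choose QS hQSdeg hQSeval using fun j => hSpoly j t
  have hR : dtPairing x t R (fun j => R j t) + centralForm α β x ψ t R (fun j => R j t)
      = splitForm α β x ψ t R (fun j => R j t) - splitForm α β x ψ t S (fun j => R j t) := by
    have h := hscheme1 QR hQRdeg t ht
    simp only [← hQReval] at h
    simp only [dtPairing, centralForm, splitForm]
    linarith
  have hS : dtPairing x t S (fun j => S j t) - centralForm α β x ψ t S (fun j => S j t)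
      = splitForm α β x ψ t R (fun j => S j t) - splitForm α β x ψ t S (fun j => S j t) := by
    have h := hscheme2 QS hQSdeg t ht
    simp only [← hQSeval] at h
    simp only [dtPairing, centralForm, splitForm]
    linarith
  rw [centralForm_self α β x ψ t R fun j => (hRpoly j t).differentiable] at hR
  rw [centralForm_self α β x ψ t S fun j => (hSpoly j t).differentiable] at hS
  have hrate : dtPairing x t R (fun j => R j t) + dtPairing x t S (fun j => S j t) = 0 := by
    linarith [splitForm_comm α β x ψ t R S]
  exact hrate ▸ hasDerivAt_energy x t R S hRreg hSreg

/-- energy conservation for the semi-discrete energy-conservative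
DG scheme based on the Riemann-invariant (`R,S`) formulation, with periodic
boundary conditions: the discrete energy
`t ↦ Σ_j ∫_{Ω_j} (R² + S²)/2 dx` has derivative zero on `[0,T]`. -/
theorem dg_RS_conservative_energy
    (N p : ℕ) [NeZero N] (T α β : ℝ) (hT : 0 < T) (hα : 0 < α) (hβ : 0 < β)
    (x : Fin (N + 1) → ℝ) (hx : StrictMono x)
    (R S ψ : Fin N → ℝ → ℝ → ℝ)
    (hRreg : ∀ j, ContDiff ℝ 1 (Function.uncurry (R j)))
    (hSreg : ∀ j, ContDiff ℝ 1 (Function.uncurry (S j)))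
    (hψreg : ∀ j, ContDiff ℝ 1 (Function.uncurry (ψ j)))
    (hRpoly : ∀ j t, IsPolyDeg p (R j t))
    (hSpoly : ∀ j t, IsPolyDeg p (S j t))
    (hψpoly : ∀ j t, IsPolyDeg p (ψ j t))
    -- scheme equation (i) (the `R`-equation), for all test functions `φ ∈ X^p_Δx`
    (hscheme1 : ∀ φ : Fin N → Polynomial ℝ, (∀ j, (φ j).natDegree ≤ p) →
      ∀ t ∈ Set.Icc (0 : ℝ) T,
        (∑ j : Fin N, ∫ y in cellL x j..cellR x j,
            deriv (fun s => R j s y) t * (φ j).eval y)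
        + (∑ j : Fin N, ∫ y in cellL x j..cellR x j,
            waveC α β (ψ j t y) * R j t y * deriv (fun z => (φ j).eval z) y)
        - (∑ j : Fin N, cbarI α β x ψ t j * avgI x R t j * (φ j).eval (cellR x j))
        + (∑ j : Fin N,
            cbarI α β x ψ t (j - 1) * avgI x R t (j - 1) * (φ j).eval (cellL x j))
        =
        (1 / 2) * (∑ j : Fin N, ∫ y in cellL x j..cellR x j,
            waveC α β (ψ j t y) * deriv (fun z => R j t z * (φ j).eval z) y)
        - (1 / 2) * (∑ j : Fin N,
            cbarI α β x ψ t j * trM x R t j * (φ j).eval (cellR x j))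
        + (1 / 2) * (∑ j : Fin N,
            cbarI α β x ψ t (j - 1) * trP x R t (j - 1) * (φ j).eval (cellL x j))
        - (1 / 2) * (∑ j : Fin N, ∫ y in cellL x j..cellR x j,
            waveC α β (ψ j t y) * deriv (fun z => S j t z * (φ j).eval z) y)
        + (1 / 2) * (∑ j : Fin N,
            cbarI α β x ψ t j * trM x S t j * (φ j).eval (cellR x j))
        - (1 / 2) * (∑ j : Fin N,
            cbarI α β x ψ t (j - 1) * trP x S t (j - 1) * (φ j).eval (cellL x j)))
    -- scheme equation (ii) (the `S`-equation), for all test functions `η ∈ X^p_Δx`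
    (hscheme2 : ∀ η : Fin N → Polynomial ℝ, (∀ j, (η j).natDegree ≤ p) →
      ∀ t ∈ Set.Icc (0 : ℝ) T,
        (∑ j : Fin N, ∫ y in cellL x j..cellR x j,
            deriv (fun s => S j s y) t * (η j).eval y)
        - (∑ j : Fin N, ∫ y in cellL x j..cellR x j,
            waveC α β (ψ j t y) * S j t y * deriv (fun z => (η j).eval z) y)
        + (∑ j : Fin N, cbarI α β x ψ t j * avgI x S t j * (η j).eval (cellR x j))
        - (∑ j : Fin N,
            cbarI α β x ψ t (j - 1) * avgI x S t (j - 1) * (η j).eval (cellL x j))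
        =
        (1 / 2) * (∑ j : Fin N, ∫ y in cellL x j..cellR x j,
            waveC α β (ψ j t y) * deriv (fun z => R j t z * (η j).eval z) y)
        - (1 / 2) * (∑ j : Fin N,
            cbarI α β x ψ t j * trM x R t j * (η j).eval (cellR x j))
        + (1 / 2) * (∑ j : Fin N,
            cbarI α β x ψ t (j - 1) * trP x R t (j - 1) * (η j).eval (cellL x j))
        - (1 / 2) * (∑ j : Fin N, ∫ y in cellL x j..cellR x j,
            waveC α β (ψ j t y) * deriv (fun z => S j t z * (η j).eval z) y)
        + (1 / 2) * (∑ j : Fin N,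
            cbarI α β x ψ t j * trM x S t j * (η j).eval (cellR x j))
        - (1 / 2) * (∑ j : Fin N,
            cbarI α β x ψ t (j - 1) * trP x S t (j - 1) * (η j).eval (cellL x j)))
    -- scheme equation (iii) (the `ψ`-equation), for all test functions `ζ ∈ X^p_Δx`
    (hscheme3 : ∀ ζ : Fin N → Polynomial ℝ, (∀ j, (ζ j).natDegree ≤ p) →
      ∀ t ∈ Set.Icc (0 : ℝ) T,
        (∑ j : Fin N, ∫ y in cellL x j..cellR x j,
            deriv (fun s => ψ j s y) t * (ζ j).eval y)
        = ∑ j : Fin N, ∫ y in cellL x j..cellR x j,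
            (R j t y + S j t y) / 2 * (ζ j).eval y) :
    ∀ t ∈ Set.Icc (0 : ℝ) T,
      HasDerivAt
        (fun s => ∑ j : Fin N, ∫ y in cellL x j..cellR x j,
          (R j s y ^ 2 + S j s y ^ 2) / 2)
        0 t :=
  dg_RS_conservative_energy_general N p T α β x R S ψ hRreg hSreg hRpoly hSpoly hscheme1 hscheme2

end
end

section
/- Let v, w, ψ be a numerical solution of the semi-discrete energy-conservative DG scheme for the (v,w) formulation with periodic boundary conditions; that is, for every t ∈ [0,T] and all test functions φ, η, ζ ∈ X^p_Δx(Ω): (i) Σ_{j=1}^N [ ∫_{Ω_j} ∂_tv·φ dx + ∫_{Ω_j} c(ψ)·w·∂_xφ dx − c̄_{j+1/2}·w̄_{j+1/2}·φ⁻_{j+1/2} + c̄_{j−1/2}·w̄_{j−1/2}·φ⁺_{j−1/2} ] = Σ_{j=1}^N [ ∫_{Ω_j} c(ψ)·∂_x(wφ) dx − c̄_{j+1/2}·w⁻_{j+1/2}·φ⁻_{j+1/2} + c̄_{j−1/2}·w⁺_{j−1/2}·φ⁺_{j−1/2} ]; (ii) Σ_{j=1}^N [ ∫_{Ω_j} ∂_tw·η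 dx + ∫_{Ω_j} c(ψ)·v·∂_xη dx − c̄_{j+1/2}·v̄_{j+1/2}·η⁻_{j+1/2} + c̄_{j−1/2}·v̄_{j−1/2}·η⁺_{j−1/2} ] = 0; (iii) Σ_{j=1}^N ∫_{Ω_j} ∂_tψ·ζ dx = Σ_{j=1}^N ∫_{Ω_j} v·ζ dx. Then the discrete energy t ↦ Σ_{j=1}^N ∫_{Ω_j} ( v(t,x)² + w(t,x)² ) dx has derivative zero for every t ∈ [0,T], i.e. it is constant in time. -/
/-!
Test the scheme with the solution itself: `φ = v(t)` in (i) and `η = w(t)` in (ii), which is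
admissible because `v(t), w(t) ∈ X^p_Δx`. The time-derivative terms then add up to half the
derivative of the energy. By the product rule the two volume terms on the left combine into
`∫ c(ψ) ∂ₓ(w v)`, the volume term on the right of (i). The interface terms cancel after a periodic
shift of the cell index, by the discrete product rule `w̄ [v] + v̄ [w] = [w v]` for the jumps
`[a] = a⁺ - a⁻`.
-/

open Finset

noncomputable section

open Polynomial

section PartialDerivative

variable {E : Type*} [NormedAddCommGroup E] [NormedSpace ℝ E] {f : ℝ → ℝ → E}

theorem ContDiff.hasDerivAt_uncurry_left (hf : ContDiff ℝ 1 (Function.uncurry f)) (t y : ℝ) :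
    HasDerivAt (fun s => f s y) (fderiv ℝ (Function.uncurry f) (t, y) (1, 0)) t := by
  have hpath : HasDerivAt (fun s : ℝ => (s, y)) ((1 : ℝ), (0 : ℝ)) t :=
    (hasDerivAt_id t).prodMk (hasDerivAt_const t y)
  exact ((hf.differentiable one_ne_zero) (t, y)).hasFDerivAt.comp_hasDerivAt t hpath

theorem ContDiff.continuous_deriv_uncurry_left (hf : ContDiff ℝ 1 (Function.uncurry f))
    (t : ℝ) : Continuous fun y => deriv (fun s => f s y) t :=
  (((hf.continuous_fderiv one_ne_zero).comp (Continuous.prodMk_right t)).clm_apply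
    continuous_const).congr fun y => (hf.hasDerivAt_uncurry_left t y).deriv.symm

theorem ContDiff.hasDerivAt_intervalIntegral_uncurry [CompleteSpace E]
    (hf : ContDiff ℝ 1 (Function.uncurry f)) (a b t : ℝ) :
    HasDerivAt (fun s => ∫ y in a..b, f s y) (∫ y in a..b, deriv (fun s => f s y) t) t := by
  set f' : ℝ × ℝ → E := fun z => fderiv ℝ (Function.uncurry f) z (1, 0)
  have hf' : Continuous f' := (hf.continuous_fderiv one_ne_zero).clm_apply continuous_const
  -- a bound of `f'` on `[t - 1, t + 1] × [a, b]` dominates the difference quotients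
  obtain ⟨C, hC⟩ := ((isCompact_closedBall t 1).prod isCompact_uIcc).exists_bound_of_continuousOn
    hf'.continuousOn
  rw [intervalIntegral.integral_congr fun y _ => (hf.hasDerivAt_uncurry_left t y).deriv]
  exact (intervalIntegral.hasDerivAt_integral_of_dominated_loc_of_deriv_le
    (F' := fun s y => f' (s, y)) (bound := fun _ => C) (Metric.ball_mem_nhds t one_pos)
    (.of_forall fun s => (hf.continuous.uncurry_left s).aestronglyMeasurable)
    ((hf.continuous.uncurry_left t).intervalIntegrable a b)
    (hf'.comp (Continuous.prodMk_right t)).aestronglyMeasurable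
    (.of_forall fun y hy s hs =>
      hC (s, y) ⟨Metric.ball_subset_closedBall hs, Set.uIoc_subset_uIcc hy⟩)
    intervalIntegrable_const
    (.of_forall fun y _ s _ => hf.hasDerivAt_uncurry_left s y)).2

end PartialDerivative

theorem hasDerivAt_integral_sq_add_sq {u v : ℝ → ℝ → ℝ}
    (hu : ContDiff ℝ 1 (Function.uncurry u)) (hv : ContDiff ℝ 1 (Function.uncurry v))
    (a b t : ℝ) :
    HasDerivAt (fun s => ∫ y in a..b, (u s y ^ 2 + v s y ^ 2))
      (2 * ((∫ y in a..b, deriv (fun s => u s y) t * u t y)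
        + ∫ y in a..b, deriv (fun s => v s y) t * v t y)) t := by
  have hderiv : ∀ y, deriv (fun s => u s y ^ 2 + v s y ^ 2) t
      = 2 * (deriv (fun s => u s y) t * u t y) + 2 * (deriv (fun s => v s y) t * v t y) := by
    intro y
    have hu' := (hu.hasDerivAt_uncurry_left t y).differentiableAt.hasDerivAt
    have hv' := (hv.hasDerivAt_uncurry_left t y).differentiableAt.hasDerivAt
    rw [((hu'.fun_pow 2).fun_add (hv'.fun_pow 2)).deriv]
    ring
  have huv : ContDiff ℝ 1 (Function.uncurry fun s y => u s y ^ 2 + v s y ^ 2) :=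
    (hu.pow 2).add (hv.pow 2)
  have hint : ∀ {g : ℝ → ℝ → ℝ}, ContDiff ℝ 1 (Function.uncurry g) →
      IntervalIntegrable (fun y => 2 * (deriv (fun s => g s y) t * g t y))
        MeasureTheory.volume a b :=
    fun hg => (continuous_const.mul ((hg.continuous_deriv_uncurry_left t).mul
      (hg.continuous.uncurry_left t))).intervalIntegrable a b
  refine (huv.hasDerivAt_intervalIntegral_uncurry a b t).congr_deriv ?_
  rw [intervalIntegral.integral_congr fun y _ => hderiv y,
    intervalIntegral.integral_add (hint hu) (hint hv), intervalIntegral.integral_const_mul,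
    intervalIntegral.integral_const_mul, mul_add]

theorem integral_mul_deriv_eval_mul {c : ℝ → ℝ} (hc : Continuous c) (P Q : ℝ[X]) (a b : ℝ) :
    ∫ y in a..b, c y * deriv (fun z => P.eval z * Q.eval z) y
      = (∫ y in a..b, c y * P.eval y * deriv (fun z => Q.eval z) y)
        + ∫ y in a..b, c y * Q.eval y * deriv (fun z => P.eval z) y := by
  simp only [Polynomial.deriv, ← eval_mul, derivative_mul]
  rw [← intervalIntegral.integral_add
    (((hc.fun_mul P.continuous).fun_mul Q.derivative.continuous).intervalIntegrable a b)
    (((hc.fun_mul Q.continuous).fun_mul P.derivative.continuous).intervalIntegrable a b)]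
  exact intervalIntegral.integral_congr fun y _ => by simp only [eval_add, eval_mul]; ring

theorem continuous_waveC (α β : ℝ) : Continuous (waveC α β) := by
  unfold waveC; fun_prop

section Interfaces

variable {N : ℕ} (x : Fin (N + 1) → ℝ)

theorem eval_cellR_eq_trM {u : Fin N → ℝ → ℝ → ℝ} {t : ℝ} {q : Fin N → ℝ[X]}
    (hq : ∀ j y, u j t y = (q j).eval y) (j : Fin N) :
    (q j).eval (cellR x j) = trM x u t j :=
  (hq j _).symm

variable [NeZero N]

theorem eval_cellL_eq_trP_sub_one {u : Fin N → ℝ → ℝ → ℝ} {t : ℝ} {q : Fin N → ℝ[X]}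
    (hq : ∀ j y, u j t y = (q j).eval y) (j : Fin N) :
    (q j).eval (cellL x j) = trP x u t (j - 1) := by
  rw [trP, sub_add_cancel]
  exact (hq j _).symm

theorem sum_central_flux_eq_sum_jump_mul (c : Fin N → ℝ) (v w : Fin N → ℝ → ℝ → ℝ) (t : ℝ) :
    (∑ j, c (j - 1) * avgI x w t (j - 1) * trP x v t (j - 1))
      - (∑ j, c j * avgI x w t j * trM x v t j)
      + (∑ j, c (j - 1) * avgI x v t (j - 1) * trP x w t (j - 1))
      - (∑ j, c j * avgI x v t j * trM x w t j)
      = (∑ j, c (j - 1) * trP x w t (j - 1) * trP x v t (j - 1))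
        - ∑ j, c j * trM x w t j * trM x v t j := by
  have shift : ∀ G : Fin N → ℝ, ∑ j, G (j - 1) = ∑ j, G j :=
    Equiv.sum_comp (Equiv.subRight 1)
  rw [shift fun j => c j * avgI x w t j * trP x v t j,
    shift fun j => c j * avgI x v t j * trP x w t j,
    shift fun j => c j * trP x w t j * trP x v t j]
  simp only [← sum_sub_distrib, ← sum_add_distrib]
  exact sum_congr rfl fun j _ => by simp only [avgI]; ring

end Interfaces

theorem dg_vw_conservative_energy_general
    (N p : ℕ) [NeZero N] (T α β : ℝ)
    (x : Fin (N + 1) → ℝ)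
    (v w ψ : Fin N → ℝ → ℝ → ℝ)
    (hvreg : ∀ j, ContDiff ℝ 1 (Function.uncurry (v j)))
    (hwreg : ∀ j, ContDiff ℝ 1 (Function.uncurry (w j)))
    (hψreg : ∀ j, ContDiff ℝ 1 (Function.uncurry (ψ j)))
    (hvpoly : ∀ j t, IsPolyDeg p (v j t))
    (hwpoly : ∀ j t, IsPolyDeg p (w j t))
    -- scheme equation (i) (the `v`-equation), for all test functions `φ ∈ X^p_Δx`
    (hscheme1 : ∀ φ : Fin N → Polynomial ℝ, (∀ j, (φ j).natDegree ≤ p) →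
      ∀ t ∈ Set.Icc (0 : ℝ) T,
        (∑ j : Fin N, ∫ y in cellL x j..cellR x j,
            deriv (fun s => v j s y) t * (φ j).eval y)
        + (∑ j : Fin N, ∫ y in cellL x j..cellR x j,
            waveC α β (ψ j t y) * w j t y * deriv (fun z => (φ j).eval z) y)
        - (∑ j : Fin N, cbarI α β x ψ t j * avgI x w t j * (φ j).eval (cellR x j))
        + (∑ j : Fin N,
            cbarI α β x ψ t (j - 1) * avgI x w t (j - 1) * (φ j).eval (cellL x j))
        =
        (∑ j : Fin N, ∫ y in cellL x j..cellR x j,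
            waveC α β (ψ j t y) * deriv (fun z => w j t z * (φ j).eval z) y)
        - (∑ j : Fin N, cbarI α β x ψ t j * trM x w t j * (φ j).eval (cellR x j))
        + (∑ j : Fin N,
            cbarI α β x ψ t (j - 1) * trP x w t (j - 1) * (φ j).eval (cellL x j)))
    -- scheme equation (ii) (the `w`-equation), for all test functions `η ∈ X^p_Δx`
    (hscheme2 : ∀ η : Fin N → Polynomial ℝ, (∀ j, (η j).natDegree ≤ p) →
      ∀ t ∈ Set.Icc (0 : ℝ) T,
        (∑ j : Fin N, ∫ y in cellL x j..cellR x j,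
            deriv (fun s => w j s y) t * (η j).eval y)
        + (∑ j : Fin N, ∫ y in cellL x j..cellR x j,
            waveC α β (ψ j t y) * v j t y * deriv (fun z => (η j).eval z) y)
        - (∑ j : Fin N, cbarI α β x ψ t j * avgI x v t j * (η j).eval (cellR x j))
        + (∑ j : Fin N,
            cbarI α β x ψ t (j - 1) * avgI x v t (j - 1) * (η j).eval (cellL x j))
        = 0) :
    ∀ t ∈ Set.Icc (0 : ℝ) T,
      HasDerivAt
        (fun s => ∑ j : Fin N, ∫ y in cellL x j..cellR x j,
          (v j s y ^ 2 + w j s y ^ 2))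
        0 t := by
  intro t ht
  choose qv hqv_deg hqv using fun j => hvpoly j t
  choose qw hqw_deg hqw using fun j => hwpoly j t
  have hc : ∀ j, Continuous fun y => waveC α β (ψ j t y) := fun j =>
    (continuous_waveC α β).comp ((hψreg j).continuous.uncurry_left t)
  have hv_tested := hscheme1 qv hqv_deg t ht
  have hw_tested := hscheme2 qw hqw_deg t ht
  simp only [eval_cellR_eq_trM x hqv, eval_cellR_eq_trM x hqw, eval_cellL_eq_trP_sub_one x hqv,
    eval_cellL_eq_trP_sub_one x hqw, hqv, hqw] at hv_tested hw_tested
  simp only [integral_mul_deriv_eval_mul (hc _), sum_add_distrib] at hv_tested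
  have hflux := sum_central_flux_eq_sum_jump_mul x (cbarI α β x ψ t) v w t
  refine (HasDerivAt.fun_sum fun j _ =>
    hasDerivAt_integral_sq_add_sq (hvreg j) (hwreg j) _ _ t).congr_deriv ?_
  simp only [hqv, hqw, ← mul_sum, sum_add_distrib]
  linear_combination 2 * (hv_tested + hw_tested - hflux)

/-- energy conservation for the semi-discrete energy-conservative
DG scheme based on the `(v,w)` formulation, with periodic boundary conditions:
the discrete energy `t ↦ Σ_j ∫_{Ω_j} (v² + w²) dx` has derivative zero on
`[0,T]`. -/
theorem dg_vw_conservative_energy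
    (N p : ℕ) [NeZero N] (T α β : ℝ) (hT : 0 < T) (hα : 0 < α) (hβ : 0 < β)
    (x : Fin (N + 1) → ℝ) (hx : StrictMono x)
    (v w ψ : Fin N → ℝ → ℝ → ℝ)
    (hvreg : ∀ j, ContDiff ℝ 1 (Function.uncurry (v j)))
    (hwreg : ∀ j, ContDiff ℝ 1 (Function.uncurry (w j)))
    (hψreg : ∀ j, ContDiff ℝ 1 (Function.uncurry (ψ j)))
    (hvpoly : ∀ j t, IsPolyDeg p (v j t))
    (hwpoly : ∀ j t, IsPolyDeg p (w j t))
    (hψpoly : ∀ j t, IsPolyDeg p (ψ j t))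
    -- scheme equation (i) (the `v`-equation), for all test functions `φ ∈ X^p_Δx`
    (hscheme1 : ∀ φ : Fin N → Polynomial ℝ, (∀ j, (φ j).natDegree ≤ p) →
      ∀ t ∈ Set.Icc (0 : ℝ) T,
        (∑ j : Fin N, ∫ y in cellL x j..cellR x j,
            deriv (fun s => v j s y) t * (φ j).eval y)
        + (∑ j : Fin N, ∫ y in cellL x j..cellR x j,
            waveC α β (ψ j t y) * w j t y * deriv (fun z => (φ j).eval z) y)
        - (∑ j : Fin N, cbarI α β x ψ t j * avgI x w t j * (φ j).eval (cellR x j))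
        + (∑ j : Fin N,
            cbarI α β x ψ t (j - 1) * avgI x w t (j - 1) * (φ j).eval (cellL x j))
        =
        (∑ j : Fin N, ∫ y in cellL x j..cellR x j,
            waveC α β (ψ j t y) * deriv (fun z => w j t z * (φ j).eval z) y)
        - (∑ j : Fin N, cbarI α β x ψ t j * trM x w t j * (φ j).eval (cellR x j))
        + (∑ j : Fin N,
            cbarI α β x ψ t (j - 1) * trP x w t (j - 1) * (φ j).eval (cellL x j)))
    -- scheme equation (ii) (the `w`-equation), for all test functions `η ∈ X^p_Δx`
    (hscheme2 : ∀ η : Fin N → Polynomial ℝ, (∀ j, (η j).natDegree ≤ p) →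
      ∀ t ∈ Set.Icc (0 : ℝ) T,
        (∑ j : Fin N, ∫ y in cellL x j..cellR x j,
            deriv (fun s => w j s y) t * (η j).eval y)
        + (∑ j : Fin N, ∫ y in cellL x j..cellR x j,
            waveC α β (ψ j t y) * v j t y * deriv (fun z => (η j).eval z) y)
        - (∑ j : Fin N, cbarI α β x ψ t j * avgI x v t j * (η j).eval (cellR x j))
        + (∑ j : Fin N,
            cbarI α β x ψ t (j - 1) * avgI x v t (j - 1) * (η j).eval (cellL x j))
        = 0)
    -- scheme equation (iii) (the `ψ`-equation), for all test functions `ζ ∈ X^p_Δx`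
    (hscheme3 : ∀ ζ : Fin N → Polynomial ℝ, (∀ j, (ζ j).natDegree ≤ p) →
      ∀ t ∈ Set.Icc (0 : ℝ) T,
        (∑ j : Fin N, ∫ y in cellL x j..cellR x j,
            deriv (fun s => ψ j s y) t * (ζ j).eval y)
        = ∑ j : Fin N, ∫ y in cellL x j..cellR x j, v j t y * (ζ j).eval y) :
    ∀ t ∈ Set.Icc (0 : ℝ) T,
      HasDerivAt
        (fun s => ∑ j : Fin N, ∫ y in cellL x j..cellR x j,
          (v j s y ^ 2 + w j s y ^ 2))
        0 t :=
  dg_vw_conservative_energy_general N p T α β x v w ψ hvreg hwreg hψreg hvpoly hwpoly hscheme1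
    hscheme2

end
end

section
/- Define φ : [0,1] → ℝ by φ(ξ) = arccos(1 − 2ξ). Then φ(0) = 0, φ(1) = π, φ is differentiable on the open interval (0,1) with φ′(ξ) = 1/√(ξ − ξ²), and φ satisfies the travelling-wave ordinary differential equation φ′(ξ)·sin(φ(ξ)) = 2 for all ξ ∈ (0,1). -/
open Real

lemma sqrt_one_sub_one_sub_two_mul_sq (ξ : ℝ) :
    √(1 - (1 - 2 * ξ) ^ 2) = 2 * √(ξ - ξ ^ 2) := by
  rw [show 1 - (1 - 2 * ξ) ^ 2 = 2 ^ 2 * (ξ - ξ ^ 2) by ring,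
    sqrt_mul (by norm_num), sqrt_sq zero_le_two]

lemma sin_arccos_one_sub_two_mul (ξ : ℝ) :
    sin (arccos (1 - 2 * ξ)) = 2 * √(ξ - ξ ^ 2) := by
  rw [sin_arccos, sqrt_one_sub_one_sub_two_mul_sq]

lemma sqrt_sub_sq_pos {ξ : ℝ} (hξ : ξ ∈ Set.Ioo (0 : ℝ) 1) : 0 < √(ξ - ξ ^ 2) :=
  sqrt_pos.2 (by nlinarith [hξ.1, hξ.2])

lemma hasDerivAt_arccos_one_sub_two_mul {ξ : ℝ} (hξ : ξ ∈ Set.Ioo (0 : ℝ) 1) :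
    HasDerivAt (fun x => arccos (1 - 2 * x)) (1 / √(ξ - ξ ^ 2)) ξ := by
  have hinner : HasDerivAt (fun x : ℝ => 1 - 2 * x) (-2) ξ := by
    simpa using ((hasDerivAt_id ξ).const_mul (2 : ℝ)).const_sub 1
  have hcomp := (hasDerivAt_arccos (by linarith [hξ.2]) (by linarith [hξ.1])).comp ξ hinner
  refine hcomp.congr_deriv ?_
  rw [sqrt_one_sub_one_sub_two_mul_sq]
  field_simp [(sqrt_sub_sq_pos hξ).ne']

/-- the travelling-wave profile `φ(ξ) = arccos(1 − 2ξ)`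
satisfies `φ(0) = 0`, `φ(1) = π`, is differentiable on `(0,1)` with
`φ′(ξ) = 1/√(ξ − ξ²)`, and satisfies the ODE `φ′ sin φ = 2` on `(0,1)`. -/
theorem travelling_wave_profile_properties
    (φ : ℝ → ℝ) (hφdef : ∀ ξ : ℝ, φ ξ = Real.arccos (1 - 2 * ξ)) :
    φ 0 = 0 ∧ φ 1 = Real.pi
    ∧ (∀ ξ ∈ Set.Ioo (0 : ℝ) 1,
        HasDerivAt φ (1 / Real.sqrt (ξ - ξ ^ 2)) ξ)
    ∧ (∀ ξ ∈ Set.Ioo (0 : ℝ) 1,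
        deriv φ ξ * Real.sin (φ ξ) = 2) := by
  obtain rfl : φ = fun ξ => arccos (1 - 2 * ξ) := funext hφdef
  refine ⟨by norm_num, by norm_num, fun ξ hξ => hasDerivAt_arccos_one_sub_two_mul hξ,
    fun ξ hξ => ?_⟩
  rw [(hasDerivAt_arccos_one_sub_two_mul hξ).deriv, sin_arccos_one_sub_two_mul,
    one_div_mul_eq_div, mul_div_assoc, div_self (sqrt_sub_sq_pos hξ).ne', mul_one]
end
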